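/- Let D be a Hamiltonian strongly connected balanced bipartite digraph of order 2a (a ≥ 3, k an integer with max{1,a/4} < k ≤ a/2) satisfying: for every dominating pair {u,v}, either d(u) ≥ 2a−k and d(v) ≥ a+k, or d(u) ≥ a+k and d(v) ≥ 2a−k. If D is not bipancyclic and not a directed cycle of length 2a, then every vertex u satisfies k+1 ≤ d⁻(u) ≤ a−1 and k+1 ≤ d⁺(u) ≤ a−1. -/

import Mathlib

open Finset Function

variable {V : Type*}

/-- Out-degree of a vertex in a digraph given by arc relation `A`. -/
noncomputable def outDeg (A : V → V → Prop) (u : V) : ℕ := {v | A u v}.ncard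

/-- In-degree of a vertex. -/
noncomputable def inDeg (A : V → V → Prop) (u : V) : ℕ := {v | A v u}.ncard

/-- Degree `d(u) = d⁺(u) + d⁻(u)`. -/
noncomputable def deg (A : V → V → Prop) (u : V) : ℕ := outDeg A u + inDeg A u

/-- Strong connectedness: a directed path between every ordered pair of vertices. -/
def StronglyConnected (A : V → V → Prop) : Prop :=
  ∀ u v : V, Relation.ReflTransGen A u v

/-- `X, Y` form a bipartition of the digraph `A`. -/
def IsBipartition (A : V → V → Prop) (X Y : Set V) : Prop :=
  Disjoint X Y ∧ X ∪ Y = Set.univ ∧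
    ∀ u v, A u v → (u ∈ X ∧ v ∈ Y) ∨ (u ∈ Y ∧ v ∈ X)

/-- `{u,v}` is a dominating pair: a common out-neighbour exists. -/
def IsDominatingPair (A : V → V → Prop) (u v : V) : Prop :=
  u ≠ v ∧ ∃ w, A u w ∧ A v w

/-- `{u,v}` is a dominated pair: a common in-neighbour exists. -/
def IsDominatedPair (A : V → V → Prop) (u v : V) : Prop :=
  u ≠ v ∧ ∃ w, A w u ∧ A w v

/-- The digraph contains a directed cycle of length `l`. -/
def HasCycleOfLength (A : V → V → Prop) (l : ℕ) : Prop :=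
  ∃ f : ZMod l → V, Function.Injective f ∧ ∀ i, A (f i) (f (i + 1))

/-- The digraph contains a Hamiltonian (directed) cycle. -/
def IsHamiltonian [Fintype V] (A : V → V → Prop) : Prop :=
  ∃ f : ZMod (Fintype.card V) ≃ V, ∀ i, A (f i) (f (i + 1))

/-- The digraph is exactly one directed cycle through all its vertices. -/
def IsDirectedCycleDigraph [Fintype V] (A : V → V → Prop) : Prop :=
  ∃ f : ZMod (Fintype.card V) ≃ V, ∀ u v, A u v ↔ ∃ i, u = f i ∧ v = f (i + 1)

/-- A balanced bipartite digraph of order `2a` is bipancyclic: it has cycles of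
all even lengths `2, 4, …, 2a`. -/
def Bipancyclic [Fintype V] (A : V → V → Prop) (a : ℕ) : Prop :=
  ∀ l, 1 ≤ l → l ≤ a → HasCycleOfLength A (2 * l)

/-- A digraph is pancyclic: cycles of all lengths `2, …, n`. -/
def Pancyclic [Fintype V] (A : V → V → Prop) : Prop :=
  ∀ l, 2 ≤ l → l ≤ Fintype.card V → HasCycleOfLength A l

/-- A cycle factor: a spanning collection of vertex-disjoint directed cycles,
i.e. a permutation `σ` with `v → σ v` an arc for every `v` (in a loopless
digraph all orbits have length `≥ 2`). -/
def HasCycleFactor (A : V → V → Prop) : Prop :=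
  ∃ σ : Equiv.Perm V, ∀ v, A v (σ v)

/-- `arcs(S,T) = |A[S,T]| + |A[T,S]|`. -/
noncomputable def arcsCount (A : V → V → Prop) (S T : Set V) : ℕ :=
  {p : V × V | p.1 ∈ S ∧ p.2 ∈ T ∧ A p.1 p.2}.ncard +
  {p : V × V | p.1 ∈ T ∧ p.2 ∈ S ∧ A p.1 p.2}.ncard

/-! If some `u ∈ X` had all of `Y` as out-neighbours, the chord from `u` to the vertex
`2(a - l) + 1` steps ahead on the Hamiltonian cycle would close a cycle of length `2l` for every
`l`; symmetrically for in-neighbours, with the chord from the vertex `2l - 1` steps ahead back to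
`u`. So a non-bipancyclic `D` has `d⁺(u), d⁻(u) ≤ a - 1`.

Since `2a - k ≥ a + k`, a vertex `x` with `d(x) < a + k` lies in no dominating pair, so it is
the only in-neighbour of each out-neighbour `y`, whence `d(y) ≤ (a - 1) + 1 < a + k`. By strong
connectivity every vertex would then have in-degree one and `D` would be its Hamiltonian cycle.
Hence `d(u) ≥ a + k` everywhere, and the upper bounds give the lower ones. -/

section Digraph

variable {A : V → V → Prop}

namespace IsBipartition

variable {X Y : Set V}

lemma symm (h : IsBipartition A X Y) : IsBipartition A Y X :=
  ⟨h.1.symm, Set.union_comm X Y ▸ h.2.1, fun u v huv => (h.2.2 u v huv).symm⟩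

lemma outNeighbor_mem (h : IsBipartition A X Y) {u v : V} (hu : u ∈ X) (huv : A u v) :
    v ∈ Y :=
  ((h.2.2 u v huv).resolve_right fun hY => Set.disjoint_left.mp h.1 hu hY.1).2

lemma inNeighbor_mem (h : IsBipartition A X Y) {u v : V} (hu : u ∈ X) (hvu : A v u) :
    v ∈ Y :=
  ((h.2.2 v u hvu).resolve_left fun hX => Set.disjoint_left.mp h.1 hu hX.2).1

lemma walk_odd_mem (h : IsBipartition A X Y) {p : ℕ → V} (hp : ∀ i, A (p i) (p (i + 1)))
    (h0 : p 0 ∈ X) (m : ℕ) : p (2 * m + 1) ∈ Y := by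
  induction m with
  | zero => exact h.outNeighbor_mem h0 (hp 0)
  | succ m ih =>
    have heven : p (2 * m + 2) ∈ X := h.symm.outNeighbor_mem ih (hp _)
    exact h.outNeighbor_mem heven (hp _)

end IsBipartition

lemma hasCycleOfLength_of_path {L : ℕ} [NeZero L] (p : ℕ → V) (hinj : Set.InjOn p (Set.Iio L))
    (harc : ∀ i, i + 1 < L → A (p i) (p (i + 1))) (hclose : A (p (L - 1)) (p 0)) :
    HasCycleOfLength A L := by
  refine ⟨fun t => p t.val, fun s t hst => ZMod.val_injective L ?_, fun t => ?_⟩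
  · exact hinj (ZMod.val_lt s) (ZMod.val_lt t) hst
  · have hsucc : (t + 1).val = (t.val + 1) % L := by
      rw [← ZMod.val_natCast, Nat.cast_add, ZMod.natCast_zmod_val, Nat.cast_one]
    have ht := ZMod.val_lt t
    rcases Nat.lt_or_ge (t.val + 1) L with hlt | hge
    · simpa only [hsucc, Nat.mod_eq_of_lt hlt] using harc _ hlt
    · have hlast : t.val = L - 1 := by omega
      show A (p t.val) (p (t + 1).val)
      rwa [hsucc, show t.val + 1 = L by omega, Nat.mod_self, hlast]

section HamiltonianCycle

variable {n : ℕ} (f : ZMod n ≃ V)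

lemma hamiltonianCycle_arc (hf : ∀ i, A (f i) (f (i + 1))) (s : ZMod n) (i : ℕ) :
    A (f (s + i)) (f (s + (i + 1 : ℕ))) := by
  simpa only [Nat.cast_add, Nat.cast_one, add_assoc] using hf (s + i)

lemma hamiltonianCycle_injOn (s : ZMod n) : Set.InjOn (fun i : ℕ => f (s + i)) (Set.Iio n) := by
  intro i hi j hj hij
  have hcast : (i : ZMod n) = j := add_left_cancel (f.injective hij)
  rw [ZMod.natCast_eq_natCast_iff'] at hcast
  rwa [Nat.mod_eq_of_lt hi, Nat.mod_eq_of_lt hj] at hcast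

lemma hasCycleOfLength_of_chord (hf : ∀ i, A (f i) (f (i + 1))) {L : ℕ} (hL : 0 < L)
    (hLn : L ≤ n) (s : ZMod n) (hchord : A (f (s + (L - 1 : ℕ))) (f s)) :
    HasCycleOfLength A L := by
  have : NeZero L := ⟨hL.ne'⟩
  refine hasCycleOfLength_of_path (fun i => f (s + i))
    ((hamiltonianCycle_injOn f s).mono fun _ hi => hi.trans_le hLn)
    (fun i _ => hamiltonianCycle_arc f hf s i) ?_
  simpa using hchord

end HamiltonianCycle

section Bipancyclic

variable [Fintype V] {X Y : Set V} {a : ℕ}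

lemma bipancyclic_of_forall_arc_to (hcard : Fintype.card V = 2 * a)
    (hbip : IsBipartition A X Y) (hham : IsHamiltonian A) {u : V} (hu : u ∈ X)
    (hfull : ∀ y ∈ Y, A u y) : Bipancyclic A a := by
  obtain ⟨f, hf⟩ := hham
  intro l hl hla
  set s := f.symm u
  have hodd := hbip.walk_odd_mem (hamiltonianCycle_arc f hf s) (by simpa [s] using hu)
  refine hasCycleOfLength_of_chord f hf (by omega) (by omega) (s + (2 * (a - l) + 1 : ℕ)) ?_
  have hback : s + ((2 * (a - l) + 1 : ℕ) : ZMod (Fintype.card V)) + (2 * l - 1 : ℕ) = s := by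
    rw [add_assoc, ← Nat.cast_add, show 2 * (a - l) + 1 + (2 * l - 1) = Fintype.card V by omega,
      ZMod.natCast_self, add_zero]
  rw [hback, f.apply_symm_apply]
  exact hfull _ (hodd (a - l))

lemma bipancyclic_of_forall_arc_from (hcard : Fintype.card V = 2 * a)
    (hbip : IsBipartition A X Y) (hham : IsHamiltonian A) {u : V} (hu : u ∈ X)
    (hfull : ∀ y ∈ Y, A y u) : Bipancyclic A a := by
  obtain ⟨f, hf⟩ := hham
  intro l hl hla
  set s := f.symm u
  have hodd := hbip.walk_odd_mem (hamiltonianCycle_arc f hf s) (by simpa [s] using hu)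
  refine hasCycleOfLength_of_chord f hf (by omega) (by omega) s ?_
  rw [f.apply_symm_apply, show 2 * l - 1 = 2 * (l - 1) + 1 by omega]
  exact hfull _ (hodd (l - 1))

lemma outDeg_lt_of_not_bipancyclic (hcard : Fintype.card V = 2 * a)
    (hbip : IsBipartition A X Y) (hY : Y.ncard = a) (hham : IsHamiltonian A)
    (hnb : ¬ Bipancyclic A a) {u : V} (hu : u ∈ X) : outDeg A u < a := by
  have hsub : {v | A u v} ⊆ Y := fun _ => hbip.outNeighbor_mem hu
  refine hY ▸ (Set.ncard_le_ncard hsub).lt_of_ne fun heq => hnb ?_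
  have hset := Set.eq_of_subset_of_ncard_le hsub heq.ge
  exact bipancyclic_of_forall_arc_to hcard hbip hham hu fun _ hy => hset.ge hy

lemma inDeg_lt_of_not_bipancyclic (hcard : Fintype.card V = 2 * a)
    (hbip : IsBipartition A X Y) (hY : Y.ncard = a) (hham : IsHamiltonian A)
    (hnb : ¬ Bipancyclic A a) {u : V} (hu : u ∈ X) : inDeg A u < a := by
  have hsub : {v | A v u} ⊆ Y := fun _ => hbip.inNeighbor_mem hu
  refine hY ▸ (Set.ncard_le_ncard hsub).lt_of_ne fun heq => hnb ?_
  have hset := Set.eq_of_subset_of_ncard_le hsub heq.ge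
  exact bipancyclic_of_forall_arc_from hcard hbip hham hu fun _ hy => hset.ge hy

lemma outDeg_lt_and_inDeg_lt_of_not_bipancyclic (hcard : Fintype.card V = 2 * a)
    (hbip : IsBipartition A X Y) (hX : X.ncard = a) (hY : Y.ncard = a)
    (hham : IsHamiltonian A) (hnb : ¬ Bipancyclic A a) (u : V) :
    outDeg A u < a ∧ inDeg A u < a := by
  rcases Set.eq_univ_iff_forall.mp hbip.2.1 u with hu | hu
  · exact ⟨outDeg_lt_of_not_bipancyclic hcard hbip hY hham hnb hu,
      inDeg_lt_of_not_bipancyclic hcard hbip hY hham hnb hu⟩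
  · exact ⟨outDeg_lt_of_not_bipancyclic hcard hbip.symm hX hham hnb hu,
      inDeg_lt_of_not_bipancyclic hcard hbip.symm hX hham hnb hu⟩

end Bipancyclic

lemma IsHamiltonian.isDirectedCycleDigraph [Fintype V] (hham : IsHamiltonian A)
    (hnd : ∀ u v, ¬ IsDominatingPair A u v) : IsDirectedCycleDigraph A := by
  obtain ⟨f, hf⟩ := hham
  refine ⟨f, fun u v => ⟨fun huv => ?_, ?_⟩⟩
  · set i := f.symm v - 1
    have hpred : A (f i) v := by simpa [i] using hf i
    refine ⟨i, ?_, by simp [i]⟩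
    by_contra hne
    exact hnd u (f i) ⟨hne, v, huv, hpred⟩
  · rintro ⟨i, rfl, rfl⟩
    exact hf i

section DegreeCondition

variable {a k : ℕ}

lemma not_isDominatingPair_of_deg_lt
    (hdeg : ∀ u v : V, IsDominatingPair A u v →
      (2 * a - k ≤ deg A u ∧ a + k ≤ deg A v) ∨
      (a + k ≤ deg A u ∧ 2 * a - k ≤ deg A v))
    (hk : 2 * k ≤ a) {x z : V} (hx : deg A x < a + k) : ¬ IsDominatingPair A x z :=
  fun h => by rcases hdeg x z h with h | h <;> omega

lemma deg_lt_of_arc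
    (hdeg : ∀ u v : V, IsDominatingPair A u v →
      (2 * a - k ≤ deg A u ∧ a + k ≤ deg A v) ∨
      (a + k ≤ deg A u ∧ 2 * a - k ≤ deg A v))
    (hk : 2 * k ≤ a) (hk0 : 0 < k) {x y : V} (hx : deg A x < a + k) (hxy : A x y)
    (hy : outDeg A y < a) : deg A y < a + k := by
  have hin : {z | A z y} = {x} := Set.eq_singleton_iff_unique_mem.mpr
    ⟨hxy, fun z hzy => by_contra fun hzx =>
      not_isDominatingPair_of_deg_lt hdeg hk hx ⟨Ne.symm hzx, y, hxy, hzy⟩⟩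
  have hy1 : inDeg A y = 1 := by rw [inDeg, hin, Set.ncard_singleton]
  rw [deg]
  omega

end DegreeCondition

end Digraph

theorem stmt_15_general {V : Type*} [Fintype V] (A : V → V → Prop) (a k : ℕ) (X Y : Set V)
    (hk1 : 1 < k) (hk3 : 2 * k ≤ a)
    (hcard : Fintype.card V = 2 * a)
    (hbip : IsBipartition A X Y) (hX : X.ncard = a) (hY : Y.ncard = a)
    (hsc : StronglyConnected A)
    (hdeg : ∀ u v : V, IsDominatingPair A u v →
      (2 * a - k ≤ deg A u ∧ a + k ≤ deg A v) ∨
      (a + k ≤ deg A u ∧ 2 * a - k ≤ deg A v))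
    (hham : IsHamiltonian A) (hnb : ¬ Bipancyclic A a)
    (hnc : ¬ IsDirectedCycleDigraph A) :
    ∀ u : V, (k + 1 ≤ inDeg A u ∧ inDeg A u ≤ a - 1) ∧
      (k + 1 ≤ outDeg A u ∧ outDeg A u ≤ a - 1) := by
  have hlt := outDeg_lt_and_inDeg_lt_of_not_bipancyclic hcard hbip hX hY hham hnb
  have hdeg_ge : ∀ u, a + k ≤ deg A u := by
    by_contra! ⟨x, hx⟩
    have hall : ∀ v, deg A v < a + k := fun v => by
      induction hsc x v with
      | refl => exact hx
      | tail _ hyz ih => exact deg_lt_of_arc hdeg hk3 (by omega) ih hyz (hlt _).1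
    exact hnc (hham.isDirectedCycleDigraph fun u _ =>
      not_isDominatingPair_of_deg_lt hdeg hk3 (hall u))
  intro u
  have hu := hdeg_ge u
  have hu' := hlt u
  rw [deg] at hu
  omega

/-- if `D` is Hamiltonian, not bipancyclic and not a `2a`-cycle, then
`k+1 ≤ d⁻(u) ≤ a−1` and `k+1 ≤ d⁺(u) ≤ a−1` for every vertex. -/
theorem stmt_15 {V : Type*} [Fintype V] (A : V → V → Prop) (a k : ℕ) (X Y : Set V)
    (ha : 3 ≤ a) (hk1 : 1 < k) (hk2 : a < 4 * k) (hk3 : 2 * k ≤ a)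
    (hcard : Fintype.card V = 2 * a)
    (hbip : IsBipartition A X Y) (hX : X.ncard = a) (hY : Y.ncard = a)
    (hsc : StronglyConnected A)
    (hdeg : ∀ u v : V, IsDominatingPair A u v →
      (2 * a - k ≤ deg A u ∧ a + k ≤ deg A v) ∨
      (a + k ≤ deg A u ∧ 2 * a - k ≤ deg A v))
    (hham : IsHamiltonian A) (hnb : ¬ Bipancyclic A a)
    (hnc : ¬ IsDirectedCycleDigraph A) :
    ∀ u : V, (k + 1 ≤ inDeg A u ∧ inDeg A u ≤ a - 1) ∧
      (k + 1 ≤ outDeg A u ∧ outDeg A u ≤ a - 1) :=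
  stmt_15_general A a k X Y hk1 hk3 hcard hbip hX hY hsc hdeg hham hnb hnc
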